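/- Let A ⊂ ℤⁿ be a finite set with 0 in the interior of Q = conv(A), let F be a proper face of Q with A_F := A ∩ F nonempty, let g : ℝⁿ∖{0} → ℝⁿ be continuous and positively homogeneous of degree 1 such that for every p ∈ cone(F) one has max_{α ∈ A∖A_F} ⟨α, g(p)⟩ < max_{β ∈ A_F} ⟨β, g(p)⟩, and let c : A → ℂ with c_α ≠ 0 for all α. Then there exist δ > 0, C > 0, and an open set V ⊆ (ℝⁿ∖{0}) × ℝⁿ which is conical in the first variable (i.e. (p, θ) ∈ V and t > 0 imply (t·p, θ) ∈ V) and contains Λ_F := {(p, θ) : p ∈ cone(F), ⟨β, θ⟩ ∈ ℤ for all β ∈ A_F}, such that for every (p, θ) ∈ V: |W(g(p), θ) − W_{A_F}(g(p), θ)| ≤ C · exp(−δ·‖p‖) · Σ_{β ∈ A_F} |c_β| · exp(⟨β, g(p)⟩). -/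

import Mathlib

attribute [local instance] Classical.propDecidable

noncomputable section

/-- The coercion of an integer vector to a real vector. -/
def toR {n : ℕ} (a : Fin n → ℤ) : Fin n → ℝ := fun i => (a i : ℝ)

/-- The pairing `⟨a, x⟩ = Σᵢ aᵢ xᵢ` of an integer vector with a real vector. -/
def dotZ {n : ℕ} (a : Fin n → ℤ) (x : Fin n → ℝ) : ℝ := ∑ i, (a i : ℝ) * x i

/-- `W_B(x, θ) = Σ_{α ∈ B} c_α · exp(⟨α, x⟩ + 2πi⟨α, θ⟩)`. -/
def Wpot {n : ℕ} (B : Finset (Fin n → ℤ)) (c : (Fin n → ℤ) → ℂ) (x θ : Fin n → ℝ) : ℂ :=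
  ∑ α ∈ B, c α * Complex.exp ((dotZ α x : ℂ) + 2 * (Real.pi : ℂ) * Complex.I * (dotZ α θ : ℂ))

/-- The open cone `{t·u : t > 0, u ∈ F}` over a set `F ⊆ ℝⁿ`. -/
def cone {n : ℕ} (F : Set (Fin n → ℝ)) : Set (Fin n → ℝ) :=
  {p | ∃ t : ℝ, 0 < t ∧ ∃ u ∈ F, p = t • u}

/-!
For `α ∉ A_F` the gap `max_{β ∈ A_F} ⟨β, g p⟩ - ⟨α, g p⟩` is positively homogeneous in `p` and
positive on `F`. The proper face `F` misses the interior point `0` and, being an extreme subset of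
a polytope, is a finite union of polytopes, hence compact; so the gap exceeds `δ‖p‖` on all of
`cone F` for some `δ > 0`. This strict inequality is open and conical and defines `V`. On `V` each
term of `W - W_{A_F}` is at most `|c_α| e^{-δ‖p‖}` times the largest exponential of `A_F`, which is
at most `(min_{A_F} |c_β|)⁻¹ Σ_{A_F} |c_β| e^{⟨β, g p⟩}`.
-/

open Filter Topology

section ExtremeSets

variable {E : Type*} [AddCommGroup E] [Module ℝ E]

theorem Finset.exists_pos_weights_of_mem_convexHull {S : Finset E} {x : E}
    (hx : x ∈ convexHull ℝ (S : Set E)) :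
    ∃ P ⊆ S, ∃ w : E → ℝ, (∀ y ∈ P, 0 < w y) ∧ ∑ y ∈ P, w y = 1 ∧ ∑ y ∈ P, w y • y = x := by
  obtain ⟨w, hw₀, hw₁, hwx⟩ := Finset.mem_convexHull'.1 hx
  have hpos : ∀ y ∈ S, w y ≠ 0 → 0 < w y := fun y hy h => (hw₀ y hy).lt_of_ne' h
  refine ⟨S.filter (0 < w ·), Finset.filter_subset _ _, w, fun y hy => (Finset.mem_filter.1 hy).2,
    ?_, ?_⟩
  · rwa [Finset.sum_filter_of_ne hpos]
  · rwa [Finset.sum_filter_of_ne fun y hy h => hpos y hy (left_ne_zero_of_smul h)]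

theorem IsExtreme.convexHull_subset_of_pos_weights {Q F : Set E} (hF : IsExtreme ℝ Q F)
    (hQ : Convex ℝ Q) {P : Finset E} (hPQ : (P : Set E) ⊆ Q) {w : E → ℝ}
    (hw₀ : ∀ y ∈ P, 0 < w y) (hw₁ : ∑ y ∈ P, w y = 1) (hx : ∑ y ∈ P, w y • y ∈ F) :
    convexHull ℝ (P : Set E) ⊆ F := by
  intro z hz
  have hzQ : z ∈ Q := convexHull_min hPQ hQ hz
  obtain ⟨ν, hν₀, hν₁, rfl⟩ := Finset.mem_convexHull'.1 hz
  have hsmall : ∀ᶠ s in 𝓝[>] (0 : ℝ), ∀ y ∈ P, s * ν y ≤ w y :=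
    nhdsWithin_le_nhds <| (Filter.eventually_all_finset P).2 fun y hy =>
      ((continuous_id.mul continuous_const).tendsto' 0 0 (zero_mul _)).eventually
        (ge_mem_nhds (hw₀ y hy))
  obtain ⟨s, hsν, hs⟩ := (hsmall.and self_mem_nhdsWithin).exists
  -- with `x = ∑ w y • y`, the point `x + s • (x - z)` is still a convex combination of `P`,
  -- and `x` lies strictly between it and `z`
  have hz' : ∑ y ∈ P, ((1 + s) * w y - s * ν y) • y ∈ Q := by
    refine hQ.sum_mem (fun y hy => ?_) ?_ fun y hy => hPQ hy
    · nlinarith [hw₀ y hy, hsν y hy]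
    · simp only [Finset.sum_sub_distrib, ← Finset.mul_sum, hw₁, hν₁]
      ring
  refine hF.2 hzQ hz' hx ⟨s / (1 + s), 1 / (1 + s), by positivity, by positivity, by
    field_simp; ring, ?_⟩
  simp only [Finset.smul_sum, ← Finset.sum_add_distrib, smul_smul, ← add_smul]
  refine Finset.sum_congr rfl fun y _ => ?_
  congr 1
  field_simp
  ring

variable [TopologicalSpace E] [IsTopologicalAddGroup E] [ContinuousSMul ℝ E]

/-- Each point of `F` has a positive-weight representation by some `P ⊆ S`, so `F` is the union of
the finitely many polytopes `convexHull P ⊆ F`. -/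
theorem IsExtreme.isCompact_of_convexHull_finset {S : Finset E} {F : Set E}
    (hF : IsExtreme ℝ (convexHull ℝ (S : Set E)) F) : IsCompact F := by
  have hF_eq : F = ⋃ P ∈ {P : Finset E | P ⊆ S ∧ convexHull ℝ (P : Set E) ⊆ F},
      convexHull ℝ (P : Set E) := by
    refine subset_antisymm (fun x hx => ?_) (Set.iUnion₂_subset fun P hP => hP.2)
    obtain ⟨P, hPS, w, hw₀, hw₁, rfl⟩ := S.exists_pos_weights_of_mem_convexHull (hF.1 hx)
    have hPF := hF.convexHull_subset_of_pos_weights (convex_convexHull ℝ _)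
      ((Finset.coe_subset.2 hPS).trans (subset_convexHull ℝ _)) hw₀ hw₁ hx
    exact Set.mem_biUnion ⟨hPS, hPF⟩
      (Finset.mem_convexHull'.2 ⟨w, fun y hy => (hw₀ y hy).le, hw₁, rfl⟩)
  rw [hF_eq]
  refine Set.Finite.isCompact_biUnion ?_ fun P _ => P.finite_toSet.isCompact_convexHull ℝ
  exact S.powerset.finite_toSet.subset fun P hP => Finset.mem_powerset.2 hP.1

theorem IsExtreme.eq_of_mem_interior {Q F : Set E} (hF : IsExtreme ℝ Q F) {w : E}
    (hwF : w ∈ F) (hwQ : w ∈ interior Q) : F = Q := by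
  refine hF.1.antisymm fun x hx => ?_
  have hnear : ∀ᶠ t in 𝓝[>] (0 : ℝ), w + t • (w - x) ∈ Q :=
    nhdsWithin_le_nhds <| (Continuous.tendsto' (by fun_prop) 0 w (by simp)).eventually
      (mem_interior_iff_mem_nhds.1 hwQ)
  obtain ⟨t, htQ, ht⟩ := (hnear.and self_mem_nhdsWithin).exists
  refine hF.2 hx htQ hwF
    ⟨t / (1 + t), 1 / (1 + t), by positivity, by positivity, by field_simp; ring, ?_⟩
  match_scalars <;> field_simp
  ring

end ExtremeSets

section Homogeneous

variable {n : ℕ}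

theorem subset_cone (F : Set (Fin n → ℝ)) : F ⊆ cone F :=
  fun u hu => ⟨1, one_pos, u, hu, (one_smul ℝ u).symm⟩

theorem ne_zero_of_mem_cone {F : Set (Fin n → ℝ)} (h0 : (0 : Fin n → ℝ) ∉ F) {p : Fin n → ℝ}
    (hp : p ∈ cone F) : p ≠ 0 := by
  obtain ⟨t, ht, u, hu, rfl⟩ := hp
  exact smul_ne_zero ht.ne' (ne_of_mem_of_not_mem hu h0)

theorem eventually_mul_norm_lt_of_isCompact {K : Set (Fin n → ℝ)} (hK : IsCompact K)
    (h0 : (0 : Fin n → ℝ) ∉ K) {h : (Fin n → ℝ) → ℝ} (hcont : ContinuousOn h K)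
    (hpos : ∀ u ∈ K, 0 < h u) (hhom : ∀ t : ℝ, 0 < t → ∀ u ∈ K, h (t • u) = t * h u) :
    ∀ᶠ δ in 𝓝[>] (0 : ℝ), ∀ p ∈ cone K, δ * ‖p‖ < h p := by
  have hnorm : ∀ u ∈ K, 0 < ‖u‖ := fun u hu => norm_pos_iff.2 (ne_of_mem_of_not_mem hu h0)
  obtain ⟨a, ha, hah⟩ := hK.exists_forall_le' (hcont.div continuous_norm.continuousOn
    fun u hu => (hnorm u hu).ne') fun u hu => div_pos (hpos u hu) (hnorm u hu)
  filter_upwards [Ioo_mem_nhdsGT ha] with δ hδ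
  rintro _ ⟨t, ht, u, hu, rfl⟩
  have hu' : a * ‖u‖ ≤ h u := (le_div_iff₀ (hnorm u hu)).1 (hah u hu)
  rw [hhom t ht u hu, norm_smul, Real.norm_of_nonneg ht.le]
  nlinarith [mul_lt_mul_of_pos_right hδ.2 (hnorm u hu)]

theorem isOpen_setOf_forall_lt {X ι : Type*} [TopologicalSpace X] {U : Set X} (hU : IsOpen U)
    (s : Finset ι) {f g : ι → X → ℝ} (hf : ∀ i ∈ s, ContinuousOn (f i) U)
    (hg : ∀ i ∈ s, ContinuousOn (g i) U) : IsOpen {x | x ∈ U ∧ ∀ i ∈ s, f i x < g i x} := by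
  refine isOpen_iff_mem_nhds.2 fun x ⟨hxU, hx⟩ => ?_
  have hU' := hU.mem_nhds hxU
  exact Filter.inter_mem hU' ((Filter.eventually_all_finset s).2 fun i hi =>
    ((hf i hi).continuousAt hU').eventually_lt ((hg i hi).continuousAt hU') (hx i hi))

end Homogeneous

section Exponentials

variable {n : ℕ}

theorem dotZ_smul (a : Fin n → ℤ) (t : ℝ) (x : Fin n → ℝ) : dotZ a (t • x) = t * dotZ a x := by
  simp only [dotZ, Pi.smul_apply, smul_eq_mul, Finset.mul_sum]
  exact Finset.sum_congr rfl fun i _ => by ring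

theorem continuous_dotZ (a : Fin n → ℤ) : Continuous (dotZ a) := by
  unfold dotZ
  fun_prop

def supDot (B : Finset (Fin n → ℤ)) (hB : B.Nonempty) (x : Fin n → ℝ) : ℝ :=
  B.sup' hB fun β => dotZ β x

theorem supDot_smul {B : Finset (Fin n → ℤ)} (hB : B.Nonempty) {t : ℝ} (ht : 0 ≤ t)
    (x : Fin n → ℝ) : supDot B hB (t • x) = t * supDot B hB x := by
  simp only [supDot, dotZ_smul]
  exact (Finset.apply_sup'_eq_sup'_comp hB (t * ·) fun a b => mul_max_of_nonneg a b ht).symm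

theorem continuous_supDot {B : Finset (Fin n → ℤ)} (hB : B.Nonempty) :
    Continuous (supDot B hB) :=
  Continuous.finset_sup'_apply hB fun β _ => continuous_dotZ β

theorem Wpot_sub_Wpot_of_subset {A B : Finset (Fin n → ℤ)} (hBA : B ⊆ A) (c : (Fin n → ℤ) → ℂ)
    (x θ : Fin n → ℝ) : Wpot A c x θ - Wpot B c x θ = Wpot (A \ B) c x θ := by
  rw [Wpot, Wpot, Wpot, ← Finset.sum_sdiff hBA, add_sub_cancel_right]

theorem norm_Wpot_le (B : Finset (Fin n → ℤ)) (c : (Fin n → ℤ) → ℂ) (x θ : Fin n → ℝ) :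
    ‖Wpot B c x θ‖ ≤ ∑ α ∈ B, ‖c α‖ * Real.exp (dotZ α x) := by
  refine (norm_sum_le _ _).trans_eq (Finset.sum_congr rfl fun α _ => ?_)
  rw [norm_mul, Complex.norm_exp]
  simp

theorem inf'_norm_mul_exp_supDot_le {B : Finset (Fin n → ℤ)} (hB : B.Nonempty)
    (c : (Fin n → ℤ) → ℂ) (x : Fin n → ℝ) :
    B.inf' hB (‖c ·‖) * Real.exp (supDot B hB x) ≤ ∑ β ∈ B, ‖c β‖ * Real.exp (dotZ β x) := by
  obtain ⟨β, hβ, hβmax⟩ := Finset.exists_mem_eq_sup' hB fun β => dotZ β x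
  calc B.inf' hB (‖c ·‖) * Real.exp (supDot B hB x)
      ≤ ‖c β‖ * Real.exp (dotZ β x) := by
        rw [supDot, hβmax]
        exact mul_le_mul_of_nonneg_right (Finset.inf'_le _ hβ) (Real.exp_pos _).le
    _ ≤ ∑ β ∈ B, ‖c β‖ * Real.exp (dotZ β x) :=
        Finset.single_le_sum (f := fun β => ‖c β‖ * Real.exp (dotZ β x))
          (fun β _ => by positivity) hβ

theorem exists_norm_Wpot_sub_le {A B : Finset (Fin n → ℤ)} (hBA : B ⊆ A) (hB : B.Nonempty)
    {c : (Fin n → ℤ) → ℂ} (hc : ∀ β ∈ B, c β ≠ 0) :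
    ∃ C : ℝ, 0 < C ∧ ∀ (x θ : Fin n → ℝ) (s : ℝ),
      (∀ α ∈ A \ B, s ≤ supDot B hB x - dotZ α x) →
        ‖Wpot A c x θ - Wpot B c x θ‖ ≤
          C * Real.exp (-s) * ∑ β ∈ B, ‖c β‖ * Real.exp (dotZ β x) := by
  set m := B.inf' hB (‖c ·‖)
  have hm : 0 < m := (Finset.lt_inf'_iff hB).2 fun β hβ => norm_pos_iff.2 (hc β hβ)
  set S := ∑ α ∈ A \ B, ‖c α‖
  have hS : 0 ≤ S := Finset.sum_nonneg fun α _ => norm_nonneg _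
  refine ⟨(S + 1) / m, by positivity, fun x θ s hs => ?_⟩
  calc ‖Wpot A c x θ - Wpot B c x θ‖
      ≤ ∑ α ∈ A \ B, ‖c α‖ * Real.exp (dotZ α x) := by
        rw [Wpot_sub_Wpot_of_subset hBA]
        exact norm_Wpot_le _ _ _ _
    _ ≤ ∑ α ∈ A \ B, ‖c α‖ * Real.exp (-s + supDot B hB x) := by
        gcongr with α hα
        linarith [hs α hα]
    _ = S * Real.exp (-s) * Real.exp (supDot B hB x) := by
        rw [← Finset.sum_mul, Real.exp_add, mul_assoc]
    _ ≤ (S + 1) * Real.exp (-s) * Real.exp (supDot B hB x) := by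
        gcongr
        linarith
    _ = (S + 1) / m * Real.exp (-s) * (m * Real.exp (supDot B hB x)) := by
        field_simp
    _ ≤ (S + 1) / m * Real.exp (-s) * ∑ β ∈ B, ‖c β‖ * Real.exp (dotZ β x) := by
        gcongr
        exact inf'_norm_mul_exp_supDot_le hB c x

end Exponentials

theorem stmt_4_general (n : ℕ)
    (A : Finset (Fin n → ℤ))
    (hQ : (0 : Fin n → ℝ) ∈ interior (convexHull ℝ (toR '' (A : Set (Fin n → ℤ)))))
    (F : Set (Fin n → ℝ))
    (hFface : IsExtreme ℝ (convexHull ℝ (toR '' (A : Set (Fin n → ℤ)))) F)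
    (hFproper : F ≠ convexHull ℝ (toR '' (A : Set (Fin n → ℤ))))
    (hAF : (A.filter fun α => toR α ∈ F).Nonempty)
    (g : (Fin n → ℝ) → (Fin n → ℝ))
    (hgc : ContinuousOn g {p | p ≠ 0})
    (hgh : ∀ t : ℝ, 0 < t → ∀ p : Fin n → ℝ, p ≠ 0 → g (t • p) = t • g p)
    (hgap : ∀ p ∈ cone F, ∀ α ∈ A \ (A.filter fun α => toR α ∈ F),
      dotZ α (g p) < (A.filter fun α => toR α ∈ F).sup' hAF fun β => dotZ β (g p))
    (c : (Fin n → ℤ) → ℂ)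
    (hc : ∀ α ∈ A, c α ≠ 0) :
    ∃ δ : ℝ, 0 < δ ∧ ∃ C : ℝ, 0 < C ∧
      ∃ V : Set ((Fin n → ℝ) × (Fin n → ℝ)), IsOpen V ∧
        (∀ q ∈ V, q.1 ≠ 0) ∧
        (∀ q ∈ V, ∀ t : ℝ, 0 < t → (t • q.1, q.2) ∈ V) ∧
        {q : (Fin n → ℝ) × (Fin n → ℝ) | q.1 ∈ cone F ∧
          ∀ β ∈ (A.filter fun α => toR α ∈ F), ∃ m : ℤ, dotZ β q.2 = (m : ℝ)} ⊆ V ∧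
        ∀ q ∈ V,
          ‖Wpot A c (g q.1) q.2 -
              Wpot (A.filter fun α => toR α ∈ F) c (g q.1) q.2‖ ≤
            C * Real.exp (-δ * ‖q.1‖) *
              ∑ β ∈ A.filter fun α => toR α ∈ F,
                ‖c β‖ * Real.exp (dotZ β (g q.1)) := by
  set AF := A.filter fun α => toR α ∈ F
  set gap : (Fin n → ℤ) → (Fin n → ℝ) → ℝ := fun α p => supDot AF hAF (g p) - dotZ α (g p)
  have hgap_cont : ∀ α, ContinuousOn (gap α) {p | p ≠ 0} := fun α =>
    ((continuous_supDot hAF).comp_continuousOn hgc).sub ((continuous_dotZ α).comp_continuousOn hgc)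
  have hgap_hom : ∀ α, ∀ t : ℝ, 0 < t → ∀ p : Fin n → ℝ, p ≠ 0 → gap α (t • p) = t * gap α p := by
    intro α t ht p hp
    simp only [gap, hgh t ht p hp, supDot_smul hAF ht.le, dotZ_smul, mul_sub]
  have h0F : (0 : Fin n → ℝ) ∉ F := fun h0 => hFproper (hFface.eq_of_mem_interior h0 hQ)
  have hF0 : ∀ u ∈ F, u ≠ 0 := fun u hu => ne_of_mem_of_not_mem hu h0F
  have hFcpt : IsCompact F := IsExtreme.isCompact_of_convexHull_finset (S := A.image toR)
    (by rwa [Finset.coe_image])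
  obtain ⟨δ, hδgap, hδ⟩ : ∃ δ : ℝ, (∀ α ∈ A \ AF, ∀ p ∈ cone F, δ * ‖p‖ < gap α p) ∧ 0 < δ :=
    (((Filter.eventually_all_finset _).2 fun α hα =>
      eventually_mul_norm_lt_of_isCompact hFcpt h0F ((hgap_cont α).mono hF0)
        (fun u hu => sub_pos.2 (hgap u (subset_cone F hu) α hα))
        fun t ht u hu => hgap_hom α t ht u (hF0 u hu)).and self_mem_nhdsWithin).exists
  obtain ⟨C, hC, hW⟩ := exists_norm_Wpot_sub_le (Finset.filter_subset _ A) hAF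
    fun β hβ => hc β (Finset.mem_filter.1 hβ).1
  refine ⟨δ, hδ, C, hC, Prod.fst ⁻¹' {p | p ≠ 0 ∧ ∀ α ∈ A \ AF, δ * ‖p‖ < gap α p},
    (isOpen_setOf_forall_lt isOpen_ne _ (fun _ _ => by fun_prop)
      fun α _ => hgap_cont α).preimage continuous_fst,
    fun q hq => hq.1, ?_, ?_, ?_⟩
  · rintro ⟨p, θ⟩ ⟨hp, hpδ⟩ t ht
    refine ⟨smul_ne_zero ht.ne' hp, fun α hα => ?_⟩
    rw [hgap_hom α t ht p hp, norm_smul, Real.norm_of_nonneg ht.le, mul_left_comm]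
    exact mul_lt_mul_of_pos_left (hpδ α hα) ht
  · rintro ⟨p, θ⟩ ⟨hp, -⟩
    exact ⟨ne_zero_of_mem_cone h0F hp, fun α hα => hδgap α hα p hp⟩
  · rintro ⟨p, θ⟩ ⟨-, hpδ⟩
    simpa only [neg_mul] using hW (g p) θ (δ * ‖p‖) fun α hα => (hpδ α hα).le

/-- With `A`, `Q = conv(A)`, a proper face `F` with `A_F ≠ ∅`, and a
homogeneous continuous `g` dominating the `A∖A_F`-exponents along `cone(F)` as before,
and arbitrary nonzero coefficients `c_α`, there exist `δ, C > 0` and an open set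
`V ⊆ (ℝⁿ∖{0}) × ℝⁿ`, conical in the first variable and containing
`Λ_F = {(p,θ) : p ∈ cone(F), ⟨β,θ⟩ ∈ ℤ ∀ β ∈ A_F}`, such that on all of `V`:
`|W(g p, θ) − W_{A_F}(g p, θ)| ≤ C · exp(−δ‖p‖) · Σ_{β ∈ A_F} |c_β| exp(⟨β, g p⟩)`. -/
theorem stmt_4 (n : ℕ) (hn : 1 ≤ n)
    (A : Finset (Fin n → ℤ))
    (hQ : (0 : Fin n → ℝ) ∈ interior (convexHull ℝ (toR '' (A : Set (Fin n → ℤ)))))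
    (F : Set (Fin n → ℝ))
    (hFface : IsExtreme ℝ (convexHull ℝ (toR '' (A : Set (Fin n → ℤ)))) F)
    (hFproper : F ≠ convexHull ℝ (toR '' (A : Set (Fin n → ℤ))))
    (hAF : (A.filter fun α => toR α ∈ F).Nonempty)
    (g : (Fin n → ℝ) → (Fin n → ℝ))
    (hgc : ContinuousOn g {p | p ≠ 0})
    (hgh : ∀ t : ℝ, 0 < t → ∀ p : Fin n → ℝ, p ≠ 0 → g (t • p) = t • g p)
    (hgap : ∀ p ∈ cone F, ∀ α ∈ A \ (A.filter fun α => toR α ∈ F),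
      dotZ α (g p) < (A.filter fun α => toR α ∈ F).sup' hAF fun β => dotZ β (g p))
    (c : (Fin n → ℤ) → ℂ)
    (hc : ∀ α ∈ A, c α ≠ 0) :
    ∃ δ : ℝ, 0 < δ ∧ ∃ C : ℝ, 0 < C ∧
      ∃ V : Set ((Fin n → ℝ) × (Fin n → ℝ)), IsOpen V ∧
        (∀ q ∈ V, q.1 ≠ 0) ∧
        (∀ q ∈ V, ∀ t : ℝ, 0 < t → (t • q.1, q.2) ∈ V) ∧
        {q : (Fin n → ℝ) × (Fin n → ℝ) | q.1 ∈ cone F ∧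
          ∀ β ∈ (A.filter fun α => toR α ∈ F), ∃ m : ℤ, dotZ β q.2 = (m : ℝ)} ⊆ V ∧
        ∀ q ∈ V,
          ‖Wpot A c (g q.1) q.2 -
              Wpot (A.filter fun α => toR α ∈ F) c (g q.1) q.2‖ ≤
            C * Real.exp (-δ * ‖q.1‖) *
              ∑ β ∈ A.filter fun α => toR α ∈ F,
                ‖c β‖ * Real.exp (dotZ β (g q.1)) :=
  stmt_4_general n A hQ F hFface hFproper hAF g hgc hgh hgap c hc
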